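/- Fix p ∈ {0,…,h̄−1}, assume u − v + 1 ≤ b ≤ u and d̄ + 1 ≤ n̄ − h̄, and let R' ⊆ {0,…,n̄−1}∖F with |R'| = d̄ + 1. Let c and c' be two codewords of C̃ such that H_{i_p,j}(a,m)[c] = H_{i_p,j}(a,m)[c'] for every j ∈ R', every m ∈ {u−v,…,b−1} and every a ∈ {0,…,s̄^n̄ − 1}. Then: (i) ∑_{g=0}^{u−1} θ^{g·m}·c(i_p·u+g, a, (p+x) mod L) = ∑_{g=0}^{u−1} θ^{g·m}·c'(i_p·u+g, a, (p+x) mod L) for every x ∈ {0,…,s̄−1}, every m ∈ {u−v,…,b−1} and every a; and (ii) H_{i_p,i}(a,m)[c] = H_{i_p,i}(a,m)[c'] for every i ∈ F∖{i_p}, every m ∈ {u−v,…,b−1} and every a. -/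

import Mathlib

/-!
Put `e = c - c'`, again a codeword, whose downloaded symbols from the racks of `R'` vanish.
Summing the parity checks of `e` at the indices `a(i_p, a_{i_p} ⊕ x)`, layer `(p + x) mod L`,
over `x`, with exponents `t = m + k·u` (so that `θ^{g t} = θ^{g m}`), gives for each `k` one
linear relation, with coefficients `λ^t`, between the unknowns `H_{i_p,i}(a, m)[e]`
(`i ∉ R' ∪ {i_p}`) and `D_x = ∑_g θ^{g m} e(i_p u + g, a(i_p, a_{i_p} ⊕ x), (p + x) mod L)`
(`x < s̄`). There are `n̄ - k̄ - 1` unknowns and as many admissible `k`, so this is a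
Vandermonde system in the nodes `λ^u`, which are distinct because `ξ` has order at least `n s̄`;
hence all unknowns vanish.
-/

/-- Replace the `i`-th digit of the `s`-ary expansion of `a` by `x`
(the paper's notation `a(i, x)`). -/
def replaceDigit (s a i x : ℕ) : ℕ := a - a / s ^ i % s * s ^ i + x * s ^ i

/-- The combined symbol `H_{i_p, j}(a, m)[c]` of the paper:
`∑_{x=0}^{sbar−1} ∑_{g=0}^{u−1} θ^{g·m} · c(j·u+g, a(i_p, a_{i_p} ⊕ x), (p+x) mod L)`,
where `ip` is the rack index `i_p`, `⊕` denotes addition modulo `sbar`, and the layer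
index is taken modulo `L`. -/
def Hval {𝔽 : Type*} [Field 𝔽] (θ : 𝔽) (sbar u L ip p j m : ℕ)
    (c : ℕ → ℕ → ℕ → 𝔽) (a : ℕ) : 𝔽 :=
  ∑ x ∈ Finset.range sbar, ∑ g ∈ Finset.range u,
    θ ^ (g * m) *
      c (j * u + g) (replaceDigit sbar a ip ((a / sbar ^ ip % sbar + x) % sbar))
        ((p + x) % L)

lemma Finset.eq_zero_of_forall_sum_mul_pow_eq_zero {R ι : Type*} [CommRing R] [IsDomain R]
    {T : Finset ι} {f v : ι → R} (hf : Set.InjOn f T)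
    (h : ∀ k < T.card, ∑ i ∈ T, v i * f i ^ k = 0) : ∀ i ∈ T, v i = 0 := by
  have hinj : Function.Injective fun j => f (T.equivFin.symm j) := fun j j' hjj' =>
    T.equivFin.symm.injective (Subtype.ext (hf (T.equivFin.symm j).2 (T.equivFin.symm j').2 hjj'))
  have hv := Matrix.eq_zero_of_forall_pow_sum_mul_pow_eq_zero hinj fun k => by
    rw [← h k k.2, ← Finset.sum_coe_sort T]
    exact Equiv.sum_comp T.equivFin.symm fun i => v i * f i ^ (k : ℕ)
  intro i hi
  simpa using congrFun hv (T.equivFin ⟨i, hi⟩)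

lemma eq_and_eq_of_mul_add_eq_mul_add {s i j d e : ℕ} (hd : d < s) (he : e < s)
    (h : i * s + d = j * s + e) : i = j ∧ d = e := by
  have hdiv : ∀ {i d : ℕ}, d < s → (i * s + d) / s = i := fun hd => by
    rw [Nat.add_comm, Nat.add_mul_div_right _ _ (by omega), Nat.div_eq_of_lt hd, Nat.zero_add]
  obtain rfl : i = j := by rw [← hdiv (i := i) hd, h, hdiv he]
  exact ⟨rfl, by omega⟩

lemma injOn_pow_pow_of_mul_lt_orderOf {M ι : Type*} [Monoid M] {ξ : M} {E : ι → ℕ}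
    {T : Set ι} {u : ℕ} (hu : 0 < u) (hE : Set.InjOn E T)
    (hlt : ∀ z ∈ T, E z * u < orderOf ξ) : Set.InjOn (fun z => (ξ ^ E z) ^ u) T := by
  intro z hz z' hz' h
  simp only [← pow_mul] at h
  exact hE hz hz' (Nat.eq_of_mul_eq_mul_right hu (pow_injOn_Iio_orderOf (hlt z hz) (hlt z' hz') h))

section Digits

variable {s a i x : ℕ}

/-- `a` with its `i`-th digit `a_i` replaced by `a_i ⊕ x` (the paper's `a(i, a_i ⊕ x)`). -/
def shiftDigit (s a i x : ℕ) : ℕ := replaceDigit s a i ((a / s ^ i % s + x) % s)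

lemma replaceDigit_eq (s a i x : ℕ) :
    replaceDigit s a i x = a % s ^ i + s ^ i * (x + s * (a / s ^ (i + 1))) := by
  have h₁ := Nat.mod_add_div a (s ^ (i + 1))
  have h₂ : a % s ^ (i + 1) = a % s ^ i + s ^ i * (a / s ^ i % s) := Nat.mod_pow_succ
  rw [replaceDigit, Nat.mul_comm (a / s ^ i % s), Nat.mul_comm x, mul_add, ← mul_assoc,
    ← pow_succ]
  generalize a % s ^ (i + 1) = r at *
  generalize a % s ^ i = r' at *
  omega

lemma replaceDigit_mod_pow (s a i x : ℕ) : replaceDigit s a i x % s ^ i = a % s ^ i := by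
  rw [replaceDigit_eq, Nat.add_mul_mod_self_left, Nat.mod_mod]

lemma replaceDigit_div_pow (hx : x < s) :
    replaceDigit s a i x / s ^ i = x + s * (a / s ^ (i + 1)) := by
  have hs : 0 < s ^ i := pow_pos (by omega) i
  rw [replaceDigit_eq, Nat.add_comm, Nat.mul_add_div hs, Nat.div_eq_of_lt (Nat.mod_lt _ hs),
    Nat.add_zero]

lemma digit_replaceDigit_self (hx : x < s) : replaceDigit s a i x / s ^ i % s = x := by
  rw [replaceDigit_div_pow hx, Nat.add_mul_mod_self_left, Nat.mod_eq_of_lt hx]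

lemma replaceDigit_div_pow_succ (hx : x < s) :
    replaceDigit s a i x / s ^ (i + 1) = a / s ^ (i + 1) := by
  conv_lhs => rw [pow_succ, ← Nat.div_div_eq_div_mul, replaceDigit_div_pow hx]
  rw [Nat.add_mul_div_left _ _ (by omega), Nat.div_eq_of_lt hx, Nat.zero_add]

lemma digit_eq_of_mod_pow_eq {b j : ℕ} (h : a % s ^ i = b % s ^ i) (hj : j < i) :
    a / s ^ j % s = b / s ^ j % s := by
  have hdvd : s ^ (j + 1) ∣ s ^ i := pow_dvd_pow s hj
  rw [← Nat.mod_mul_right_div_self, ← Nat.mod_mul_right_div_self, ← pow_succ,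
    ← Nat.mod_mod_of_dvd a hdvd, h, Nat.mod_mod_of_dvd b hdvd]

lemma digit_eq_of_div_pow_eq {b j : ℕ} (h : a / s ^ i = b / s ^ i) (hj : i ≤ j) :
    a / s ^ j % s = b / s ^ j % s := by
  obtain ⟨k, rfl⟩ := Nat.exists_eq_add_of_le hj
  rw [pow_add, ← Nat.div_div_eq_div_mul, h, Nat.div_div_eq_div_mul]

lemma digit_replaceDigit_of_ne {j : ℕ} (hx : x < s) (hj : j ≠ i) :
    replaceDigit s a i x / s ^ j % s = a / s ^ j % s := by
  rcases Nat.lt_or_gt_of_ne hj with hj | hj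
  · exact digit_eq_of_mod_pow_eq (replaceDigit_mod_pow s a i x) hj
  · exact digit_eq_of_div_pow_eq (replaceDigit_div_pow_succ hx) hj

lemma replaceDigit_lt_pow {n : ℕ} (ha : a < s ^ n) (hi : i < n) (hx : x < s) :
    replaceDigit s a i x < s ^ n := by
  have hs : 0 < s ^ (i + 1) := pow_pos (by omega) _
  have hn : s ^ n = s ^ (n - (i + 1)) * s ^ (i + 1) := by rw [← pow_add]; congr 1; omega
  rw [hn, ← Nat.div_lt_iff_lt_mul hs, replaceDigit_div_pow_succ hx, Nat.div_lt_iff_lt_mul hs,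
    ← hn]
  exact ha

lemma replaceDigit_replaceDigit {y : ℕ} (hx : x < s) :
    replaceDigit s (replaceDigit s a i x) i y = replaceDigit s a i y := by
  rw [replaceDigit_eq, replaceDigit_eq s a i y, replaceDigit_mod_pow, replaceDigit_div_pow_succ hx]

lemma replaceDigit_digit_self (s a i : ℕ) : replaceDigit s a i (a / s ^ i % s) = a := by
  have h : a / s ^ i % s * s ^ i ≤ a :=
    (Nat.mul_le_mul_right _ (Nat.mod_le _ _)).trans (Nat.div_mul_le_self a _)
  rw [replaceDigit, Nat.sub_add_cancel h]

lemma shiftDigit_lt_pow {n : ℕ} (hs : 0 < s) (ha : a < s ^ n) (hi : i < n) :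
    shiftDigit s a i x < s ^ n :=
  replaceDigit_lt_pow ha hi (Nat.mod_lt _ hs)

lemma digit_shiftDigit_of_ne {j : ℕ} (hs : 0 < s) (hj : j ≠ i) :
    shiftDigit s a i x / s ^ j % s = a / s ^ j % s :=
  digit_replaceDigit_of_ne (Nat.mod_lt _ hs) hj

lemma digit_shiftDigit_self (hs : 0 < s) :
    shiftDigit s a i x / s ^ i % s = (a / s ^ i % s + x) % s :=
  digit_replaceDigit_self (Nat.mod_lt _ hs)

lemma exists_shiftDigit_eq {n : ℕ} (ha : a < s ^ n) (hi : i < n) (hx : x < s) :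
    ∃ b < s ^ n, shiftDigit s b i x = a := by
  have hs : 0 < s := by omega
  set d := a / s ^ i % s
  refine ⟨replaceDigit s a i ((d + (s - x)) % s),
    replaceDigit_lt_pow ha hi (Nat.mod_lt _ hs), ?_⟩
  have hd : d < s := Nat.mod_lt _ hs
  rw [shiftDigit, digit_replaceDigit_self (Nat.mod_lt _ hs), Nat.mod_add_mod (d + (s - x)),
    show d + (s - x) + x = d + s by omega, Nat.add_mod_right, Nat.mod_eq_of_lt hd,
    replaceDigit_replaceDigit (Nat.mod_lt _ hs), replaceDigit_digit_self]

end Digits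

open Finset

section Code

variable {𝔽 : Type*} [Field 𝔽]

def rackSum (θ : 𝔽) (u m : ℕ) (c : ℕ → ℕ → ℕ → 𝔽) (j a y : ℕ) : 𝔽 :=
  ∑ g ∈ range u, θ ^ (g * m) * c (j * u + g) a y

/-- Membership in the stacked code `C̃`, with `λ_{i,j} = ξ ^ (i * sbar + j)`. -/
def IsCodeword (ξ θ : 𝔽) (nbar u sbar r L : ℕ) (c : ℕ → ℕ → ℕ → 𝔽) : Prop :=
  ∀ t < r, ∀ a < sbar ^ nbar, ∀ y < L,
    ∑ i ∈ range nbar, ∑ g ∈ range u,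
      θ ^ (g * t) * (ξ ^ (i * sbar + a / sbar ^ i % sbar)) ^ t * c (i * u + g) a y = 0

variable {ξ θ : 𝔽} {nbar u s r L ip p j m a : ℕ} {c c' : ℕ → ℕ → ℕ → 𝔽}

lemma Hval_eq_sum_rackSum :
    Hval θ s u L ip p j m c a =
      ∑ x ∈ range s, rackSum θ u m c j (shiftDigit s a ip x) ((p + x) % L) :=
  rfl

lemma Hval_sub :
    Hval θ s u L ip p j m (c - c') a =
      Hval θ s u L ip p j m c a - Hval θ s u L ip p j m c' a := by
  simp only [Hval, Pi.sub_apply, mul_sub, sum_sub_distrib]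

lemma rackSum_sub {y : ℕ} :
    rackSum θ u m (c - c') j a y = rackSum θ u m c j a y - rackSum θ u m c' j a y := by
  simp only [rackSum, Pi.sub_apply, mul_sub, sum_sub_distrib]

lemma IsCodeword.sub (hc : IsCodeword ξ θ nbar u s r L c)
    (hc' : IsCodeword ξ θ nbar u s r L c') :
    IsCodeword ξ θ nbar u s r L (c - c') := by
  intro t ht a ha y hy
  simp only [Pi.sub_apply, mul_sub, sum_sub_distrib, hc t ht a ha y hy, hc' t ht a ha y hy,
    sub_zero]

lemma rackSum_add_mul_of_pow_eq_one (hθ : θ ^ u = 1) {k y : ℕ} :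
    rackSum θ u (m + k * u) c j a y = rackSum θ u m c j a y := by
  refine sum_congr rfl fun g _ => ?_
  rw [show g * (m + k * u) = g * m + u * (g * k) by ring, pow_add, pow_mul θ u, hθ, one_pow,
    mul_one]

lemma IsCodeword.sum_mul_rackSum_eq_zero (hc : IsCodeword ξ θ nbar u s r L c) {t y : ℕ}
    (ht : t < r) (ha : a < s ^ nbar) (hy : y < L) :
    ∑ i ∈ range nbar, (ξ ^ (i * s + a / s ^ i % s)) ^ t * rackSum θ u t c i a y = 0 := by
  rw [← hc t ht a ha y hy]
  refine sum_congr rfl fun i _ => ?_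
  rw [rackSum, mul_sum]
  exact sum_congr rfl fun g _ => by ring

/-- The parity checks at `a(i_p, a_{i_p} ⊕ x)`, layer `(p + x) mod L`, summed over `x`: shifting
digit `i_p` leaves every other digit `a_i` unchanged, so rack `i ≠ i_p` contributes
`λ_{i,a_i}^t · H_{i_p,i}(a, m)`. -/
lemma IsCodeword.sum_mul_Hval_add_sum_mul_rackSum_eq_zero (hc : IsCodeword ξ θ nbar u s r L c)
    (hθ : θ ^ u = 1) (hs : 0 < s) (hL : 0 < L) (hip : ip < nbar) {k : ℕ} (ha : a < s ^ nbar)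
    (ht : m + k * u < r) :
    ∑ i ∈ (range nbar).erase ip,
        (ξ ^ (i * s + a / s ^ i % s)) ^ (m + k * u) * Hval θ s u L ip p i m c a
      + ∑ x ∈ range s, (ξ ^ (ip * s + (a / s ^ ip % s + x) % s)) ^ (m + k * u)
          * rackSum θ u m c ip (shiftDigit s a ip x) ((p + x) % L) = 0 := by
  have h := sum_eq_zero (s := range s) fun x _ =>
    hc.sum_mul_rackSum_eq_zero ht (shiftDigit_lt_pow (x := x) hs ha hip) (Nat.mod_lt (p + x) hL)
  rw [sum_comm, ← add_sum_erase _ _ (mem_range.2 hip)] at h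
  rw [← h, add_comm]
  congr 1
  · refine sum_congr rfl fun x _ => ?_
    rw [digit_shiftDigit_self hs, rackSum_add_mul_of_pow_eq_one hθ]
  · refine sum_congr rfl fun i hi => ?_
    rw [Hval_eq_sum_rackSum, mul_sum]
    refine sum_congr rfl fun x _ => ?_
    rw [digit_shiftDigit_of_ne hs (ne_of_mem_erase hi), rackSum_add_mul_of_pow_eq_one hθ]

/-- The exponents of `λ` in the relation above: `λ_{i, a_i}` for a rack `i ≠ i_p` (left summand)
and `λ_{i_p, a_{i_p} ⊕ x}` (right summand). -/
def lambdaExp (s a ip : ℕ) : ℕ ⊕ ℕ → ℕ :=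
  Sum.elim (fun i => i * s + a / s ^ i % s) (fun x => ip * s + (a / s ^ ip % s + x) % s)

lemma injOn_lambdaExp {S : Finset ℕ} (hs : 0 < s) (hS : S ⊆ (range nbar).erase ip) :
    Set.InjOn (lambdaExp s a ip) ↑(S.disjSum (range s)) := by
  have hd : ∀ i, a / s ^ i % s < s := fun i => Nat.mod_lt _ hs
  have hx : ∀ x, (a / s ^ ip % s + x) % s < s := fun x => Nat.mod_lt _ hs
  rintro (i | x) hz (i' | x') hz' h <;>
    simp only [lambdaExp, mem_coe, inl_mem_disjSum, inr_mem_disjSum, mem_range, Sum.elim_inl,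
      Sum.elim_inr] at hz hz' h
  · exact congrArg Sum.inl (eq_and_eq_of_mul_add_eq_mul_add (hd i) (hd i') h).1
  · exact absurd (eq_and_eq_of_mul_add_eq_mul_add (hd i) (hx x') h).1 (ne_of_mem_erase (hS hz))
  · exact absurd (eq_and_eq_of_mul_add_eq_mul_add (hx x) (hd i') h).1.symm
      (ne_of_mem_erase (hS hz'))
  · have h : x % s = x' % s :=
      Nat.ModEq.add_left_cancel' _ (eq_and_eq_of_mul_add_eq_mul_add (hx x) (hx x') h).2
    rw [Nat.mod_eq_of_lt hz, Nat.mod_eq_of_lt hz'] at h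
    rw [h]

lemma lambdaExp_lt {S : Finset ℕ} (hs : 0 < s) (hS : S ⊆ (range nbar).erase ip)
    (hip : ip < nbar) :
    ∀ z ∈ S.disjSum (range s), lambdaExp s a ip z < nbar * s := by
  have hlt : ∀ {i d : ℕ}, i < nbar → d < s → i * s + d < nbar * s := fun _ _ => by nlinarith
  rintro (i | x) hz
  · exact hlt (mem_range.1 (mem_of_mem_erase (hS (inl_mem_disjSum.1 hz)))) (Nat.mod_lt _ hs)
  · exact hlt hip (Nat.mod_lt _ hs)

lemma IsCodeword.Hval_eq_zero_and_rackSum_eq_zero (hc : IsCodeword ξ θ nbar u s r L c)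
    (hθ : θ ^ u = 1) (hord : nbar * s * u ≤ orderOf ξ) (hs : 0 < s) (hL : 0 < L) (hm : m < u)
    (hip : ip < nbar) (ha : a < s ^ nbar) {R' : Finset ℕ} (hR' : R' ⊆ (range nbar).erase ip)
    (hr : (nbar - 1 - R'.card + s) * u ≤ r) (hH : ∀ j ∈ R', Hval θ s u L ip p j m c a = 0) :
    (∀ i ∈ (range nbar).erase ip \ R', Hval θ s u L ip p i m c a = 0) ∧
      ∀ x < s, rackSum θ u m c ip (shiftDigit s a ip x) ((p + x) % L) = 0 := by
  have hS : (range nbar).erase ip \ R' ⊆ (range nbar).erase ip := sdiff_subset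
  set T := ((range nbar).erase ip \ R').disjSum (range s)
  set μ : ℕ ⊕ ℕ → 𝔽 := fun z => ξ ^ lambdaExp s a ip z
  set w : ℕ ⊕ ℕ → 𝔽 := Sum.elim (fun i => Hval θ s u L ip p i m c a)
    (fun x => rackSum θ u m c ip (shiftDigit s a ip x) ((p + x) % L))
  have hcard : T.card = nbar - 1 - R'.card + s := by
    rw [card_disjSum, card_sdiff_of_subset hR', card_erase_of_mem (mem_range.2 hip), card_range,
      card_range]
  have hsys : ∀ k < T.card, ∑ z ∈ T, (w z * μ z ^ m) * (μ z ^ u) ^ k = 0 := by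
    intro k hk
    have ht : m + k * u < r := calc
      m + k * u < (k + 1) * u := by linarith
      _ ≤ (nbar - 1 - R'.card + s) * u := Nat.mul_le_mul_right _ (by omega)
      _ ≤ r := hr
    have h := hc.sum_mul_Hval_add_sum_mul_rackSum_eq_zero (p := p) hθ hs hL hip ha ht
    rw [← sum_subset hS fun i hi hiS => by
      rw [hH i (of_not_not fun h => hiS (mem_sdiff.2 ⟨hi, h⟩)), mul_zero]] at h
    rw [sum_disjSum, ← h]
    congr 1 <;> refine sum_congr rfl fun z _ => ?_ <;>
      simp only [μ, w, lambdaExp, Sum.elim_inl, Sum.elim_inr] <;> ring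
  have hnodes : Set.InjOn (fun z => μ z ^ u) T :=
    injOn_pow_pow_of_mul_lt_orderOf (by omega) (injOn_lambdaExp hs hS) fun z hz =>
      (Nat.mul_lt_mul_of_pos_right (lambdaExp_lt hs hS hip z hz) (by omega)).trans_le hord
  have hμ : ∀ z, μ z ≠ 0 := fun z => pow_ne_zero _ fun hξ => by
    rw [hξ, orderOf_zero] at hord
    exact (Nat.mul_pos (Nat.mul_pos (by omega) hs) (by omega)).not_ge hord
  have hw : ∀ z ∈ T, w z = 0 := fun z hz =>
    (mul_eq_zero.1 (eq_zero_of_forall_sum_mul_pow_eq_zero hnodes hsys z hz)).resolve_right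
      (pow_ne_zero _ (hμ z))
  exact ⟨fun i hi => hw (.inl i) (inl_mem_disjSum.2 hi),
    fun x hx => hw (.inr x) (inr_mem_disjSum.2 (mem_range.2 hx))⟩

end Code

theorem stmt12_general {𝔽 : Type*} [Field 𝔽] [Fintype 𝔽]
    (nbar u kbar hbar dbar δ v b : ℕ)
    (hδ2 : δ ≤ hbar - 1)
    (hv : v < u) (hb2 : b ≤ u)
    (hd1 : kbar ≤ dbar) (hd2 : dbar + 1 ≤ nbar - hbar)
    (k n r sbar L : ℕ)
    (hk : k = kbar * u + v) (hn : n = nbar * u) (hr : r = n - k)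
    (hsbar : sbar = dbar - kbar + 1) (hL : L = sbar + hbar - δ)
    (hcard : n * sbar + 1 ≤ Fintype.card 𝔽)
    (ξ θ : 𝔽) (hξ : orderOf ξ = Fintype.card 𝔽 - 1) (hθ : orderOf θ = u)
    -- the host racks `i₀ < i₁ < … < i_{hbar−1}`, given by `iF 0, …, iF (hbar−1)`
    (iF : ℕ → ℕ) (hiF : StrictMonoOn iF (Set.Iio hbar)) (hiFn : ∀ q < hbar, iF q < nbar)
    -- the enlarged set `R'` of `dbar + 1` helper racks
    (R' : Finset ℕ) (hR' : R'.card = dbar + 1) (hRn : ∀ j ∈ R', j < nbar)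
    (hRF : ∀ j ∈ R', ∀ q < hbar, j ≠ iF q)
    -- two codewords of the stacked MDS array code `C̃`
    (c c' : ℕ → ℕ → ℕ → 𝔽)
    (hc : ∀ t < r, ∀ a < sbar ^ nbar, ∀ y < L,
      ∑ i ∈ Finset.range nbar, ∑ g ∈ Finset.range u,
        θ ^ (g * t) * (ξ ^ (i * sbar + a / sbar ^ i % sbar)) ^ t * c (i * u + g) a y = 0)
    (hc' : ∀ t < r, ∀ a < sbar ^ nbar, ∀ y < L,
      ∑ i ∈ Finset.range nbar, ∑ g ∈ Finset.range u,
        θ ^ (g * t) * (ξ ^ (i * sbar + a / sbar ^ i % sbar)) ^ t * c' (i * u + g) a y = 0)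
    (p : ℕ) (hp : p < hbar)
    -- the downloaded symbols agree
    (hH : ∀ j ∈ R', ∀ m, u - v ≤ m → m < b → ∀ a < sbar ^ nbar,
      Hval θ sbar u L (iF p) p j m c a = Hval θ sbar u L (iF p) p j m c' a) :
    (∀ x < sbar, ∀ m, u - v ≤ m → m < b → ∀ a < sbar ^ nbar,
      ∑ g ∈ Finset.range u, θ ^ (g * m) * c (iF p * u + g) a ((p + x) % L)
        = ∑ g ∈ Finset.range u, θ ^ (g * m) * c' (iF p * u + g) a ((p + x) % L))
    ∧ (∀ q < hbar, q ≠ p → ∀ m, u - v ≤ m → m < b → ∀ a < sbar ^ nbar,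
      Hval θ sbar u L (iF p) p (iF q) m c a = Hval θ sbar u L (iF p) p (iF q) m c' a) := by
  have hs : 0 < sbar := by omega
  have hL0 : 0 < L := by omega
  have hip : iF p < nbar := hiFn p hp
  have hR'sub : R' ⊆ (range nbar).erase (iF p) := fun j hj =>
    mem_erase.2 ⟨hRF j hj p hp, mem_range.2 (hRn j hj)⟩
  have hord : nbar * sbar * u ≤ orderOf ξ := by
    have : nbar * sbar * u = n * sbar := by rw [hn]; ring
    omega
  have hrank : (nbar - 1 - R'.card + sbar) * u ≤ r := by
    obtain ⟨M, rfl⟩ : ∃ M, nbar = M + kbar + 1 := ⟨nbar - kbar - 1, by omega⟩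
    rw [show M + kbar + 1 - 1 - R'.card + sbar = M by omega, hr, hn, hk, add_mul, add_mul, one_mul]
    omega
  have key := fun m (hm1 : u - v ≤ m) (hm2 : m < b) a (ha : a < sbar ^ nbar) =>
    (IsCodeword.sub (L := L) hc hc').Hval_eq_zero_and_rackSum_eq_zero (m := m) (p := p)
      (hθ ▸ pow_orderOf_eq_one θ) hord hs hL0 (by omega) hip ha hR'sub hrank fun j hj => by
        rw [Hval_sub, hH j hj m hm1 hm2 a ha, sub_self]
  refine ⟨fun x hx m hm1 hm2 a ha => ?_, fun q hq hqp m hm1 hm2 a ha => ?_⟩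
  · obtain ⟨a', ha', rfl⟩ := exists_shiftDigit_eq ha hip hx
    have h := (key m hm1 hm2 a' ha').2 x hx
    rwa [rackSum_sub, sub_eq_zero] at h
  · have hq' : iF q ∈ (range nbar).erase (iF p) \ R' :=
      mem_sdiff.2 ⟨mem_erase.2 ⟨fun h => hqp (hiF.injOn hq hp h), mem_range.2 (hiFn q hq)⟩,
        fun h => hRF _ h q hq rfl⟩
    have h := (key m hm1 hm2 a ha).1 _ hq'
    rwa [Hval_sub, sub_eq_zero] at h

/-- **Lemma 1(2) of the paper** (download phase, case `u − v + 1 ≤ b ≤ u`, using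
`dbar + 1` helper racks `R'`): if two codewords `c, c'` of the stacked code `C̃` give
the same downloaded symbols `H_{i_p,j}(a,m)` for all `j ∈ R'`, all
`m ∈ {u−v, …, b−1}` and all `a < sbar^nbar`, then they agree on (i) the combinations
`∑_g θ^{g·m}·c(i_p·u+g, a, (p+x) mod L)` for `x < sbar`, and
(ii) the symbols `H_{i_p,i}(a,m)` for every other host rack `i ∈ F∖{i_p}`,
for all `m ∈ {u−v, …, b−1}`. -/
theorem stmt12 {𝔽 : Type*} [Field 𝔽] [Fintype 𝔽]
    (nbar u kbar hbar dbar δ v b : ℕ)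
    (hnbar : 0 < nbar) (hu : 0 < u) (hkbar : 0 < kbar) (hhbar : 0 < hbar)
    (hδ1 : 1 ≤ δ) (hδ2 : δ ≤ hbar - 1)
    (hv : v < u) (hb1 : u - v + 1 ≤ b) (hb2 : b ≤ u)
    (hd1 : kbar ≤ dbar) (hd2 : dbar + 1 ≤ nbar - hbar) (hhn : hbar ≤ nbar)
    (k n r sbar L : ℕ)
    (hk : k = kbar * u + v) (hn : n = nbar * u) (hr : r = n - k)
    (hsbar : sbar = dbar - kbar + 1) (hL : L = sbar + hbar - δ)
    (hcard : n * sbar + 1 ≤ Fintype.card 𝔽) (hdvd : u ∣ Fintype.card 𝔽 - 1)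
    (ξ θ : 𝔽) (hξ : orderOf ξ = Fintype.card 𝔽 - 1) (hθ : orderOf θ = u)
    -- the host racks `i₀ < i₁ < … < i_{hbar−1}`, given by `iF 0, …, iF (hbar−1)`
    (iF : ℕ → ℕ) (hiF : StrictMonoOn iF (Set.Iio hbar)) (hiFn : ∀ q < hbar, iF q < nbar)
    -- the enlarged set `R'` of `dbar + 1` helper racks
    (R' : Finset ℕ) (hR' : R'.card = dbar + 1) (hRn : ∀ j ∈ R', j < nbar)
    (hRF : ∀ j ∈ R', ∀ q < hbar, j ≠ iF q)
    -- two codewords of the stacked MDS array code `C̃`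
    (c c' : ℕ → ℕ → ℕ → 𝔽)
    (hc : ∀ t < r, ∀ a < sbar ^ nbar, ∀ y < L,
      ∑ i ∈ Finset.range nbar, ∑ g ∈ Finset.range u,
        θ ^ (g * t) * (ξ ^ (i * sbar + a / sbar ^ i % sbar)) ^ t * c (i * u + g) a y = 0)
    (hc' : ∀ t < r, ∀ a < sbar ^ nbar, ∀ y < L,
      ∑ i ∈ Finset.range nbar, ∑ g ∈ Finset.range u,
        θ ^ (g * t) * (ξ ^ (i * sbar + a / sbar ^ i % sbar)) ^ t * c' (i * u + g) a y = 0)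
    (p : ℕ) (hp : p < hbar)
    -- the downloaded symbols agree
    (hH : ∀ j ∈ R', ∀ m, u - v ≤ m → m < b → ∀ a < sbar ^ nbar,
      Hval θ sbar u L (iF p) p j m c a = Hval θ sbar u L (iF p) p j m c' a) :
    (∀ x < sbar, ∀ m, u - v ≤ m → m < b → ∀ a < sbar ^ nbar,
      ∑ g ∈ Finset.range u, θ ^ (g * m) * c (iF p * u + g) a ((p + x) % L)
        = ∑ g ∈ Finset.range u, θ ^ (g * m) * c' (iF p * u + g) a ((p + x) % L))
    ∧ (∀ q < hbar, q ≠ p → ∀ m, u - v ≤ m → m < b → ∀ a < sbar ^ nbar,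
      Hval θ sbar u L (iF p) p (iF q) m c a = Hval θ sbar u L (iF p) p (iF q) m c' a) :=
  stmt12_general nbar u kbar hbar dbar δ v b hδ2 hv hb2 hd1 hd2 k n r sbar L hk hn hr hsbar hL hcard
    ξ θ hξ hθ iF hiF hiFn R' hR' hRn hRF c c' hc hc' p hp hH
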